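/- For an affine involution z ∈ Ĩ_n, the set of visible descents of z equals the set of right descents of α_min(z), and the involution code of z equals the code of α_min(z); i.e., for all i, s_i ∈ Des_V(z) iff ℓ(α_min(z) s_i) < ℓ(α_min(z)), and ĉ(z) = c(α_min(z)). -/

import Mathlib

open scoped TensorProduct

/-- Membership in the affine symmetric group `S̃_n`, viewed inside `Equiv.Perm ℤ`. -/
def IsAffine (n : ℕ) (π : Equiv.Perm ℤ) : Prop :=
  (∀ i : ℤ, π (i + n) = π i + n) ∧
  (∑ i ∈ Finset.Icc (1 : ℤ) (n : ℤ), π i) = ∑ i ∈ Finset.Icc (1 : ℤ) (n : ℤ), i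

/-- The underlying function of the affine reflection `t_{ij}`. -/
def affTFun (n : ℕ) (i j k : ℤ) : ℤ :=
  if (k - i) % (n : ℤ) = 0 then k - i + j
  else if (k - j) % (n : ℤ) = 0 then k - j + i
  else k

theorem affTFun_involutive {n : ℕ} {i j : ℤ} (h : ¬ (j - i) % (n : ℤ) = 0) :
    Function.Involutive (affTFun n i j) := by
  have key : ∀ a : ℤ, a % (n : ℤ) = 0 ↔ (n : ℤ) ∣ a :=
    fun a => (@Int.dvd_iff_emod_eq_zero (n : ℤ) a).symm
  rw [key] at h
  intro k
  by_cases h1 : (n : ℤ) ∣ (k - i)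
  · have h2 : ¬ (n : ℤ) ∣ (k - i + j - i) := by
      intro hd
      apply h
      have h5 : j - i = (k - i + j - i) - (k - i) := by ring
      rw [h5]
      exact dvd_sub hd h1
    have h3 : (n : ℤ) ∣ (k - i + j - j) := by
      have h5 : k - i + j - j = k - i := by ring
      rw [h5]; exact h1
    have e1 : affTFun n i j k = k - i + j := by simp [affTFun, key, h1]
    have e2 : affTFun n i j (k - i + j) = k := by
      simp only [affTFun, key]
      rw [if_neg h2, if_pos h3]
      ring
    rw [e1, e2]
  · by_cases h2 : (n : ℤ) ∣ (k - j)
    · have h3 : (n : ℤ) ∣ (k - j + i - i) := by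
        have h5 : k - j + i - i = k - j := by ring
        rw [h5]; exact h2
      have e1 : affTFun n i j k = k - j + i := by simp [affTFun, key, h1, h2]
      have e2 : affTFun n i j (k - j + i) = k := by
        simp only [affTFun, key]
        rw [if_pos h3]
        ring
      rw [e1, e2]
    · have e1 : affTFun n i j k = k := by simp [affTFun, key, h1, h2]
      rw [e1, e1]

/-- The affine reflection `t_{ij}` (interpreted as the identity when `i ≡ j (mod n)`). -/
noncomputable def affT (n : ℕ) (i j : ℤ) : Equiv.Perm ℤ :=
  if h : (j - i) % (n : ℤ) = 0 then 1
  else Function.Involutive.toPerm _ (affTFun_involutive h)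

/-- The simple reflection `s_i = t_{i,i+1}` of `S̃_n`. -/
noncomputable def affS (n : ℕ) (i : ℤ) : Equiv.Perm ℤ := affT n i (i + 1)

/-- Coxeter length: minimal length of a word in the simple reflections `s_1, …, s_n`. -/
noncomputable def wordLength (n : ℕ) (π : Equiv.Perm ℤ) : ℕ :=
  sInf {l : ℕ | ∃ w : List ℤ,
    (∀ x ∈ w, 1 ≤ x ∧ x ≤ (n : ℤ)) ∧ (w.map (affS n)).prod = π ∧ w.length = l}

/-- The set of inversions of `π`, up to the diagonal translation relation. -/
def InvPair (π : Equiv.Perm ℤ) : Type :=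
  {p : ℤ × ℤ // p.1 < p.2 ∧ π p.2 < π p.1}

/-- The number of equivalence classes of inversions of `π` under
`(a,b) ~ (a + mn, b + mn)`. -/
noncomputable def invLength (n : ℕ) (π : Equiv.Perm ℤ) : ℕ :=
  Nat.card (Quot fun p q : InvPair π =>
    ∃ m : ℤ, q.1.1 = p.1.1 + m * n ∧ q.1.2 = p.1.2 + m * n)

/-- Entry `c_i` of the code of an affine permutation. -/
noncomputable def codeEntry (π : Equiv.Perm ℤ) (i : ℤ) : ℕ :=
  Nat.card {j : ℤ // i < j ∧ π j < π i}

/-- Entry `ĉ_i` of the involution code of an affine involution. -/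
noncomputable def icodeEntry (z : Equiv.Perm ℤ) (i : ℤ) : ℕ :=
  Nat.card {j : ℤ // i < j ∧ z j < z i ∧ z j ≤ i}

/-- `ℓ'(z)`: `n` minus the number of orbits of `z` acting on `ℤ/nℤ`. -/
noncomputable def lprime (n : ℕ) (z : Equiv.Perm ℤ) : ℕ :=
  n - Nat.card (Quot fun a b : ZMod n => ((z (a.val : ℤ) : ℤ) : ZMod n) = b)

/-- The characterizing properties of the Demazure (0-Hecke) product on `S̃_n`:
closure, associativity, `s_i ∘ s_i = s_i`, and agreement with the group product
on length-additive factorizations. -/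
def IsDemazure (n : ℕ) (D : Equiv.Perm ℤ → Equiv.Perm ℤ → Equiv.Perm ℤ) : Prop :=
  (∀ a b, IsAffine n a → IsAffine n b → IsAffine n (D a b)) ∧
  (∀ a b c, IsAffine n a → IsAffine n b → IsAffine n c →
    D (D a b) c = D a (D b c)) ∧
  (∀ i : ℤ, D (affS n i) (affS n i) = affS n i) ∧
  (∀ a b, IsAffine n a → IsAffine n b →
    wordLength n (a * b) = wordLength n a + wordLength n b → D a b = a * b)

/-- The set of Hecke atoms `{π : π⁻¹ ∘ π = z}`. -/
def AHecke (n : ℕ) (D : Equiv.Perm ℤ → Equiv.Perm ℤ → Equiv.Perm ℤ)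
    (z : Equiv.Perm ℤ) : Set (Equiv.Perm ℤ) :=
  {π | IsAffine n π ∧ D π⁻¹ π = z}

/-- The set of atoms: minimal-length Hecke atoms. -/
def DemAtoms (n : ℕ) (D : Equiv.Perm ℤ → Equiv.Perm ℤ → Equiv.Perm ℤ)
    (z : Equiv.Perm ℤ) : Set (Equiv.Perm ℤ) :=
  {π | π ∈ AHecke n D z ∧ ∀ σ ∈ AHecke n D z, wordLength n π ≤ wordLength n σ}

/-- The Bruhat covering relation on `S̃_n`. -/
def BruhatCov (n : ℕ) (a b : Equiv.Perm ℤ) : Prop :=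
  (∃ i j : ℤ, i < j ∧ (j - i) % (n : ℤ) ≠ 0 ∧ b = a * affT n i j) ∧
  wordLength n b = wordLength n a + 1

/-- The Bruhat order on `S̃_n`. -/
def BruhatLE (n : ℕ) : Equiv.Perm ℤ → Equiv.Perm ℤ → Prop :=
  Relation.ReflTransGen (BruhatCov n)

/-- The covering relation of the Bruhat order restricted to involutions in `S̃_n`. -/
def BruhatCovI (n : ℕ) (y z : Equiv.Perm ℤ) : Prop :=
  IsAffine n y ∧ IsAffine n z ∧ y⁻¹ = y ∧ z⁻¹ = z ∧
  BruhatLE n y z ∧ y ≠ z ∧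
  ∀ w : Equiv.Perm ℤ, IsAffine n w → w⁻¹ = w →
    BruhatLE n y w → BruhatLE n w z → w = y ∨ w = z

/-- Strict dominance order on partitions (written as weakly decreasing functions). -/
def DomLT (p q : ℕ → ℕ) : Prop :=
  p ≠ q ∧ ∀ k : ℕ, ∑ i ∈ Finset.range k, p i ≤ ∑ i ∈ Finset.range k, q i

/-- The shape `λ(π)`: the transpose of the partition sorting the code of `π⁻¹`,
recorded as the weakly decreasing function `k ↦ λ(π)_{k+1}`. -/
noncomputable def affShape (n : ℕ) (π : Equiv.Perm ℤ) : ℕ → ℕ :=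
  fun k => Multiset.countP (fun x => k < x)
    ((Finset.Icc (1 : ℤ) (n : ℤ)).val.map (codeEntry π⁻¹))

/-- The shape `μ(z)`: the transpose of the partition sorting the involution code of `z`,
recorded as the weakly decreasing function `k ↦ μ(z)_{k+1}`. -/
noncomputable def invShape (n : ℕ) (z : Equiv.Perm ℤ) : ℕ → ℕ :=
  fun k => Multiset.countP (fun x => k < x)
    ((Finset.Icc (1 : ℤ) (n : ℤ)).val.map (icodeEntry z))

/-- The weakly decreasing rearrangement of a multiset of naturals, padded by zeros. -/
noncomputable def rearr (s : Multiset ℕ) : ℕ → ℕ :=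
  fun k => ((s.sort (· ≤ ·)).reverse).getD k 0

/-- Remove the entries of a list of integers that repeat an earlier residue mod `n`. -/
def dedupMod (n : ℕ) : List ℤ → List ℤ
  | [] => []
  | x :: xs => x :: dedupMod n (xs.filter fun y => (y - x) % (n : ℤ) ≠ 0)
termination_by l => l.length
decreasing_by
  simp only [List.length_cons, List.length_unattach]
  exact Nat.lt_succ_of_le ((List.length_filter_le _ _).trans (le_of_eq List.length_attach))

/-- The window `[[z(a₁), a₁, z(a₂), a₂, …]]` of `α_min(z)⁻¹`, where `a₁ < a₂ < ⋯`
are the elements `a ∈ [n]` with `a ≤ z(a)`. -/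
noncomputable def aminWindow (n : ℕ) (z : Equiv.Perm ℤ) : List ℤ :=
  dedupMod n
    ((((Finset.Icc (1 : ℤ) (n : ℤ)).sort (· ≤ ·)).filter fun a => a ≤ z a).flatMap
      fun a => [z a, a])

/-- Cyclically decreasing elements of `S̃_n`. -/
def IsCycDec (n : ℕ) (π : Equiv.Perm ℤ) : Prop :=
  ∃ w : List ℤ,
    (∀ x ∈ w, 1 ≤ x ∧ x ≤ (n : ℤ)) ∧ (w.map (affS n)).prod = π ∧
    w.length = wordLength n π ∧
    w.Pairwise fun a b => (a + 1 - b) % (n : ℤ) ≠ 0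

/-- The coefficient of the monomial `∏ₖ xₖ₊₁^(α k)` in Lam's affine Stanley symmetric
function `F_π`: the number of length-additive factorizations of `π` into cyclically
decreasing factors of lengths prescribed by `α`. -/
noncomputable def stanleyCoeff (n : ℕ) (π : Equiv.Perm ℤ) (α : ℕ →₀ ℕ) : ℕ :=
  Nat.card {f : ℕ → Equiv.Perm ℤ //
    (∀ k, IsCycDec n (f k)) ∧ (∀ k, wordLength n (f k) = α k) ∧
    (∑ k ∈ α.support, α k) = wordLength n π ∧
    ∃ N : ℕ, (∀ k, N ≤ k → f k = 1) ∧ ((List.range N).map f).prod = π}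

/-- The set `Φ⁻_r(y)` of Bruhat covers of `y` of the form `τⁿ_{i r}(y)` with `i < r`
and `i ∉ {r, y(r)} + nℤ`. -/
def PhiMinus (n : ℕ) (τ : ℤ → ℤ → Equiv.Perm ℤ → Equiv.Perm ℤ)
    (y : Equiv.Perm ℤ) (r : ℤ) : Set (Equiv.Perm ℤ) :=
  {z | BruhatCovI n y z ∧ ∃ i : ℤ, i < r ∧ (i - r) % (n : ℤ) ≠ 0 ∧
    (i - y r) % (n : ℤ) ≠ 0 ∧ z = τ i r y}

/-- The set `Φ⁺_r(y)` of Bruhat covers of `y` of the form `τⁿ_{r j}(y)` with `r < j`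
and `j ∉ {r, y(r)} + nℤ`. -/
def PhiPlus (n : ℕ) (τ : ℤ → ℤ → Equiv.Perm ℤ → Equiv.Perm ℤ)
    (y : Equiv.Perm ℤ) (r : ℤ) : Set (Equiv.Perm ℤ) :=
  {z | BruhatCovI n y z ∧ ∃ j : ℤ, r < j ∧ (j - r) % (n : ℤ) ≠ 0 ∧
    (j - y r) % (n : ℤ) ≠ 0 ∧ z = τ r j y}

/-- The affine symmetric group as a subtype of `Equiv.Perm ℤ`. -/
abbrev AffPerm (n : ℕ) := {π : Equiv.Perm ℤ // IsAffine n π}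

/-- The coproduct `Δ(π) = Σ_{π ≐ π'π''} π' ⊗ π''` on `ℚ S̃_n`. -/
noncomputable def affComul (n : ℕ) :
    (AffPerm n →₀ ℚ) →ₗ[ℚ] TensorProduct ℚ (AffPerm n →₀ ℚ) (AffPerm n →₀ ℚ) :=
  Finsupp.lift _ ℚ _ fun π : AffPerm n =>
    ∑ᶠ p ∈ {p : AffPerm n × AffPerm n |
        p.1.val * p.2.val = π.val ∧
        wordLength n π.val = wordLength n p.1.val + wordLength n p.2.val},
      (Finsupp.single p.1 (1 : ℚ)) ⊗ₜ[ℚ] (Finsupp.single p.2 (1 : ℚ))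

/-!
Write `b = α_min(z)⁻¹`. Reading its window `[[z(a₁), a₁, z(a₂), a₂, …]]` and translating by
multiples of `n`, the entries `b p ≤ z (b p)` appear in increasing order along `ℤ`, and every
other entry `b p` is immediately followed by `z (b p)`. A case analysis on the kinds of `b p` and
`b q` then shows that for `i < j`, `α_min(z)(j) < α_min(z)(i)` exactly when `z(j) < z(i)` and
`z(j) ≤ i`. This is the equality of the codes; at `j = i + 1` it is the equality of the descent
sets, since `ℓ(π s_i) < ℓ(π) ↔ π(i + 1) < π(i)`. The latter holds because the Coxeter length
equals the sum of the code over one period, which changes by exactly one under `π ↦ π s_i`: the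
reflection `s_i` permutes the inversions with first entry in `(i - 1, i - 1 + n]`, except for the
pair `(i, i + 1)`.
-/

namespace AffinePerm

open Finset Function

/-- The first conjunct of `IsAffine n`. -/
def ShiftEquivariant (n : ℕ) (f : ℤ → ℤ) : Prop := ∀ i : ℤ, f (i + n) = f i + n

namespace ShiftEquivariant

variable {n : ℕ} {f : ℤ → ℤ}

theorem periodic_sub (hf : ShiftEquivariant n f) : Periodic (fun i => f i - i) (n : ℤ) :=
  fun i => by simp only [hf i]; ring

theorem add_mul (hf : ShiftEquivariant n f) (i m : ℤ) : f (i + m * n) = f i + m * n := by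
  have h : f (i + m * n) - (i + m * n) = f i - i := hf.periodic_sub.int_mul m i
  linarith

theorem perm_mul {π σ : Equiv.Perm ℤ} (hπ : ShiftEquivariant n π) (hσ : ShiftEquivariant n σ) :
    ShiftEquivariant n ⇑(π * σ) := fun i => by
  simp only [Equiv.Perm.coe_mul, comp_apply, hσ i, hπ (σ i)]

theorem perm_inv {π : Equiv.Perm ℤ} (hπ : ShiftEquivariant n π) :
    ShiftEquivariant n ⇑π⁻¹ := fun i => π.injective (by rw [hπ]; simp)

theorem exists_abs_sub_le (hn : 0 < n) (hf : ShiftEquivariant n f) :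
    ∃ M : ℤ, ∀ i, |f i - i| ≤ M := by
  refine ⟨(Ico (0 : ℤ) n).sup' (nonempty_Ico.2 (by exact_mod_cast hn)) fun i => |f i - i|,
    fun i => ?_⟩
  obtain ⟨j, hj, hij⟩ := hf.periodic_sub.exists_mem_Ico₀ (by exact_mod_cast hn) i
  rw [show f i - i = f j - j from hij]
  exact le_sup' (fun i => |f i - i|) (mem_Ico.2 hj)

theorem dvd_sub_apply (hf : ShiftEquivariant n f) {x y : ℤ} (h : (n : ℤ) ∣ x - y) :
    (n : ℤ) ∣ f x - f y := by
  obtain ⟨c, hc⟩ := h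
  rw [show x = y + c * n by linarith, hf.add_mul]
  exact ⟨c, by ring⟩

end ShiftEquivariant

theorem exists_eq_add_mul_of_mem_Ioc {n : ℕ} (hn : 0 < n) (t i : ℤ) :
    ∃ r ∈ Set.Ioc t (t + n), ∃ m : ℤ, i = r + m * n :=
  ⟨_, toIocMod_mem_Ioc (by exact_mod_cast hn) t i, _,
    by rw [← smul_eq_mul, toIocMod_add_toIocDiv_zsmul]⟩

theorem exists_eq_natCast_add_one_add_mul {n : ℕ} (hn : 0 < n) (p : ℤ) :
    ∃ k : ℕ, k < n ∧ ∃ m : ℤ, p = k + 1 + m * n := by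
  obtain ⟨r, hr, m, rfl⟩ := exists_eq_add_mul_of_mem_Ioc hn 0 p
  rw [Set.mem_Ioc] at hr
  exact ⟨(r - 1).toNat, by omega, m, by omega⟩

theorem sum_Ioc_eq_of_periodic {M : Type*} [AddCommMonoid M] {n : ℕ} (hn : 0 < n) {f : ℤ → M}
    (hf : Periodic f (n : ℤ)) (t : ℤ) :
    ∑ k ∈ Ioc t (t + n), f k = ∑ k ∈ Ioc 0 (n : ℤ), f k := by
  have hp : (0 : ℤ) < n := by exact_mod_cast hn
  refine sum_nbij' (toIocMod hp 0) (toIocMod hp t) ?_ ?_ ?_ ?_ ?_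
  · intro k _; simpa using toIocMod_mem_Ioc hp 0 k
  · intro k _; simpa using toIocMod_mem_Ioc hp t k
  · intro k hk; rw [toIocMod_toIocMod, toIocMod_eq_self]; simpa using hk
  · intro k hk; rw [toIocMod_toIocMod, toIocMod_eq_self]; simpa using hk
  · intro k _
    calc f k = f (toIocMod hp 0 k + toIocDiv hp 0 k • (n : ℤ)) := by
          rw [toIocMod_add_toIocDiv_zsmul]
      _ = f (toIocMod hp 0 k) := hf.zsmul _ _

theorem eq_of_dvd_sub {m x y : ℤ} (h : m ∣ x - y) (h₁ : x - y < m) (h₂ : y - x < m) : x = y :=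
  sub_eq_zero.mp (Int.eq_zero_of_abs_lt_dvd h (abs_lt.mpr ⟨by linarith, h₁⟩))

theorem isAffine_iff {n : ℕ} (hn : 0 < n) (π : Equiv.Perm ℤ) (t : ℤ) :
    IsAffine n π ↔ ShiftEquivariant n π ∧ ∑ k ∈ Ioc t (t + n), (π k - k) = 0 := by
  have hIcc : Icc (1 : ℤ) n = Ioc (0 : ℤ) n := by ext; simp only [mem_Icc, mem_Ioc]; omega
  have hsum : ∀ hπ : ShiftEquivariant n π, ∑ k ∈ Ioc t (t + n), (π k - k) =
      ∑ k ∈ Icc (1 : ℤ) n, π k - ∑ k ∈ Icc (1 : ℤ) n, k := fun hπ => by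
    rw [sum_Ioc_eq_of_periodic hn hπ.periodic_sub, ← sum_sub_distrib, hIcc]
  exact ⟨fun h => ⟨h.1, by rw [hsum h.1, h.2, sub_self]⟩,
    fun h => ⟨h.1, sub_eq_zero.mp (by rw [← hsum h.1, h.2])⟩⟩

section SimpleReflection

variable {n : ℕ}

theorem affS_apply (hn : 2 ≤ n) (i k : ℤ) :
    affS n i k = if (n : ℤ) ∣ k - i then k + 1 else if (n : ℤ) ∣ k - i - 1 then k - 1 else k := by
  have h₁ : ¬ (i + 1 - i) % (n : ℤ) = 0 := by
    rw [add_sub_cancel_left, Int.emod_eq_of_lt zero_le_one (by omega)]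
    exact one_ne_zero
  rw [affS, affT, dif_neg h₁]
  change affTFun n i (i + 1) k = _
  simp only [affTFun, ← Int.dvd_iff_emod_eq_zero, sub_add_eq_sub_sub]
  split_ifs <;> ring

theorem affS_mul_self (n : ℕ) (i : ℤ) : affS n i * affS n i = 1 := by
  rw [affS, affT]
  split_ifs with h
  · exact one_mul 1
  · exact Equiv.ext (affTFun_involutive h)

@[simp]
theorem affS_affS (n : ℕ) (i k : ℤ) : affS n i (affS n i k) = k :=
  congrArg (· k) (affS_mul_self n i)

theorem affS_self (hn : 2 ≤ n) (i : ℤ) : affS n i i = i + 1 := by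
  simp [affS_apply hn]

theorem affS_add_one (hn : 2 ≤ n) (i : ℤ) : affS n i (i + 1) = i := by
  rw [← affS_self hn i, affS_affS]

theorem shiftEquivariant_affS (hn : 2 ≤ n) (i : ℤ) : ShiftEquivariant n (affS n i) := by
  intro k
  simp only [affS_apply hn, show k + n - i = k - i + n by ring, dvd_add_self_right,
    show k - i + n - 1 = k - i - 1 + n by ring]
  split_ifs <;> ring

theorem affS_apply_le (hn : 2 ≤ n) (i k : ℤ) : affS n i k ≤ k + 1 := by
  rw [affS_apply hn]; split_ifs <;> omega

theorem le_affS_apply (hn : 2 ≤ n) (i k : ℤ) : k - 1 ≤ affS n i k := by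
  rw [affS_apply hn]; split_ifs <;> omega

theorem dvd_of_affS_eq_add_one (hn : 2 ≤ n) {i k : ℤ} (h : affS n i k = k + 1) :
    (n : ℤ) ∣ k - i := by
  rw [affS_apply hn] at h; split_ifs at h with h' <;> first | exact h' | omega

theorem affS_lt_affS_iff (hn : 2 ≤ n) {i k j : ℤ} (hk : ¬ ((n : ℤ) ∣ k - i ∧ j = k + 1))
    (hj : ¬ ((n : ℤ) ∣ j - i ∧ k = j + 1)) : affS n i k < affS n i j ↔ k < j := by
  have := affS_apply_le hn i k; have := le_affS_apply hn i k
  have := affS_apply_le hn i j; have := le_affS_apply hn i j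
  have hinj : affS n i k = affS n i j ↔ k = j := (affS n i).injective.eq_iff
  constructor
  · intro h
    by_contra! hjk
    have hkj : k = j + 1 := by omega
    exact hj ⟨dvd_of_affS_eq_add_one hn (by omega), hkj⟩
  · intro h
    by_contra! hjk
    have hjk' : j = k + 1 := by omega
    exact hk ⟨dvd_of_affS_eq_add_one hn (by omega), hjk'⟩

theorem eq_of_mem_Ioc_of_dvd {t k l : ℤ} (hk : k ∈ Ioc t (t + n)) (hl : l ∈ Ioc t (t + n))
    (h : (n : ℤ) ∣ k - l) : k = l := by
  rw [mem_Ioc] at hk hl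
  exact eq_of_dvd_sub h (by omega) (by omega)

theorem affS_mem_window (hn : 2 ≤ n) {i k : ℤ} (hk : k ∈ Ioc (i - 1) (i - 1 + n)) :
    affS n i k ∈ Ioc (i - 1) (i - 1 + n) := by
  have hi : i ∈ Ioc (i - 1) (i - 1 + n) := by rw [mem_Ioc]; omega
  have hi₁ : i + 1 ∈ Ioc (i - 1) (i - 1 + n) := by rw [mem_Ioc]; omega
  rw [affS_apply hn]
  split_ifs with h h'
  · rwa [eq_of_mem_Ioc_of_dvd hk hi h]
  · rwa [eq_of_mem_Ioc_of_dvd hk hi₁ (by rwa [sub_add_eq_sub_sub]), add_sub_cancel_right]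
  · exact hk

theorem sum_window_comp_affS {M : Type*} [AddCommMonoid M] (hn : 2 ≤ n) (i : ℤ) (g : ℤ → M) :
    ∑ k ∈ Ioc (i - 1) (i - 1 + n), g (affS n i k) = ∑ k ∈ Ioc (i - 1) (i - 1 + n), g k :=
  sum_nbij' (affS n i) (affS n i) (fun _ hk => affS_mem_window hn hk)
    (fun _ hk => affS_mem_window hn hk) (fun k _ => affS_affS n i k) (fun k _ => affS_affS n i k)
    fun _ _ => rfl

theorem isAffine_mul_affS (hn : 2 ≤ n) {π : Equiv.Perm ℤ} (hπ : IsAffine n π) (i : ℤ) :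
    IsAffine n (π * affS n i) := by
  have hn₀ : 0 < n := by omega
  rw [isAffine_iff hn₀ _ (i - 1)] at hπ ⊢
  refine ⟨hπ.1.perm_mul (shiftEquivariant_affS hn i), ?_⟩
  rw [sum_sub_distrib] at hπ ⊢
  simpa only [Equiv.Perm.coe_mul, comp_apply, sum_window_comp_affS hn i π] using hπ.2

end SimpleReflection

section Inversions

variable {n : ℕ}

theorem finite_lt_of_apply_lt (hn : 0 < n) {π : Equiv.Perm ℤ} (hπ : ShiftEquivariant n π)
    (i : ℤ) : Finite {j : ℤ // i < j ∧ π j < π i} := by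
  obtain ⟨M, hM⟩ := hπ.exists_abs_sub_le hn
  refine Set.Finite.to_subtype <|
    (Set.finite_Ioo i (i + 2 * M + 1)).subset fun j (hj : i < j ∧ π j < π i) => ⟨hj.1, ?_⟩
  have := abs_le.mp (hM i)
  have := abs_le.mp (hM j)
  have := hj.2
  omega

theorem codeEntry_add_period {π : Equiv.Perm ℤ} (hπ : ShiftEquivariant n π) (i : ℤ) :
    codeEntry π (i + n) = codeEntry π i :=
  (Nat.card_congr (Equiv.subtypeEquiv (Equiv.addRight (n : ℤ)) fun j => by
    rw [Equiv.coe_addRight, hπ, hπ, add_lt_add_iff_right, add_lt_add_iff_right])).symm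

noncomputable def invCount (n : ℕ) (π : Equiv.Perm ℤ) : ℕ :=
  ∑ k ∈ Ioc (0 : ℤ) n, codeEntry π k

theorem sum_codeEntry_Ioc (hn : 0 < n) {π : Equiv.Perm ℤ} (hπ : ShiftEquivariant n π) (t : ℤ) :
    ∑ k ∈ Ioc t (t + n), codeEntry π k = invCount n π :=
  sum_Ioc_eq_of_periodic hn (codeEntry_add_period hπ) t

theorem invCount_one : invCount n 1 = 0 :=
  sum_eq_zero fun k _ => by
    rw [codeEntry, Nat.card_eq_zero]
    exact Or.inl ⟨fun ⟨j, hj⟩ => by simp only [Equiv.Perm.coe_one, id_eq] at hj; omega⟩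

def invSet (W : Finset ℤ) (π : Equiv.Perm ℤ) : Set (ℤ × ℤ) :=
  {p | p.1 ∈ W ∧ p.1 < p.2 ∧ π p.2 < π p.1}

def invSetEquivSigma (W : Finset ℤ) (π : Equiv.Perm ℤ) :
    invSet W π ≃ Σ k : W, {j : ℤ // (k : ℤ) < j ∧ π j < π k} where
  toFun p := ⟨⟨p.1.1, p.2.1⟩, p.1.2, p.2.2⟩
  invFun q := ⟨(q.1, q.2), q.1.2, q.2.2⟩
  left_inv _ := rfl
  right_inv _ := rfl

variable (hn : 0 < n) {π : Equiv.Perm ℤ} (hπ : ShiftEquivariant n π)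
include hn hπ

theorem finite_invSet (W : Finset ℤ) : (invSet W π).Finite := by
  have := finite_lt_of_apply_lt hn hπ
  exact Finite.of_equiv _ (invSetEquivSigma W π).symm

theorem ncard_invSet (W : Finset ℤ) : (invSet W π).ncard = ∑ k ∈ W, codeEntry π k := by
  have := finite_lt_of_apply_lt hn hπ
  rw [← Nat.card_coe_set_eq, Nat.card_congr (invSetEquivSigma W π), Nat.card_sigma]
  exact sum_coe_sort W (codeEntry π)

end Inversions

section Toggle

variable {n : ℕ} (hn : 2 ≤ n) {π : Equiv.Perm ℤ}
include hn

theorem invSet_mul_affS {i : ℤ} (h : π i < π (i + 1)) :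
    invSet (Ioc (i - 1) (i - 1 + n)) (π * affS n i) =
      insert (i, i + 1)
        (Prod.map (affS n i) (affS n i) ⁻¹' invSet (Ioc (i - 1) (i - 1 + n)) π) := by
  set W := Ioc (i - 1) (i - 1 + n)
  have hiW : i ∈ W := by rw [mem_Ioc]; omega
  have hi₁W : i + 1 ∈ W := by rw [mem_Ioc]; omega
  have hmem : ∀ k, affS n i k ∈ W ↔ k ∈ W :=
    fun k => ⟨fun hk => by simpa only [affS_affS] using affS_mem_window hn hk, affS_mem_window hn⟩
  ext ⟨k, j⟩
  simp only [invSet, Set.mem_insert_iff, Set.mem_preimage, Set.mem_ofPred_eq, Prod.map_fst,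
    Prod.map_snd, Prod.mk.injEq, Equiv.Perm.coe_mul, comp_apply, hmem]
  by_cases hkW : k ∈ W
  swap
  · simp only [hkW, false_and, or_false, false_iff, not_and]
    rintro rfl
    exact absurd hiW hkW
  by_cases hfirst : k = i ∧ j = i + 1
  · obtain ⟨rfl, rfl⟩ := hfirst
    simp only [affS_self (by omega), affS_add_one hn, h, hiW, and_self, true_or, lt_add_one]
  by_cases hsecond : k = i + 1 ∧ j = i
  · obtain ⟨rfl, rfl⟩ := hsecond
    simp only [affS_self (by omega), affS_add_one hn]
    omega
  have hord : affS n i k < affS n i j ↔ k < j := by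
    refine affS_lt_affS_iff hn (fun ⟨hd, hj⟩ => hfirst ?_) (fun ⟨hd, hk⟩ => hsecond ?_)
    · have hk := eq_of_mem_Ioc_of_dvd hkW hiW hd
      exact ⟨hk, by rw [hj, hk]⟩
    · have hk' := eq_of_mem_Ioc_of_dvd hkW hi₁W (by rwa [hk, add_sub_add_right_eq_sub])
      exact ⟨hk', by omega⟩
  rw [hord, or_iff_right hfirst]

theorem invCount_mul_affS_of_lt (hπ : ShiftEquivariant n π) {i : ℤ} (h : π i < π (i + 1)) :
    invCount n (π * affS n i) = invCount n π + 1 := by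
  have hn₀ : 0 < n := by omega
  have hσ : ShiftEquivariant n ⇑(π * affS n i) := hπ.perm_mul (shiftEquivariant_affS hn i)
  have hS : Bijective (Prod.map (affS n i) (affS n i)) :=
    (affS n i).bijective.prodMap (affS n i).bijective
  have hnotMem :
      (i, i + 1) ∉ Prod.map (affS n i) (affS n i) ⁻¹' invSet (Ioc (i - 1) (i - 1 + n)) π := by
    simp only [Set.mem_preimage, Prod.map, affS_self (by omega), affS_add_one hn]
    exact fun h' => absurd h'.2.1 (by omega)
  rw [← sum_codeEntry_Ioc hn₀ hσ (i - 1), ← sum_codeEntry_Ioc hn₀ hπ (i - 1),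
    ← ncard_invSet hn₀ hσ, ← ncard_invSet hn₀ hπ, invSet_mul_affS hn h,
    Set.ncard_insert_of_notMem hnotMem ((finite_invSet hn₀ hπ _).preimage hS.injective.injOn),
    Set.ncard_preimage_of_injective_subset_range hS.injective
      (hS.surjective.range_eq ▸ Set.subset_univ _)]

theorem invCount_mul_affS_of_gt (hπ : ShiftEquivariant n π) {i : ℤ} (h : π (i + 1) < π i) :
    invCount n π = invCount n (π * affS n i) + 1 := by
  have h' : (π * affS n i) i < (π * affS n i) (i + 1) := by
    simpa only [Equiv.Perm.coe_mul, comp_apply, affS_self (by omega), affS_add_one hn] using h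
  simpa only [mul_assoc, affS_mul_self, mul_one] using
    invCount_mul_affS_of_lt hn (hπ.perm_mul (shiftEquivariant_affS hn i)) h'

end Toggle

section Length

variable {n : ℕ}

theorem eq_add_apply_zero_of_strictMono {π : Equiv.Perm ℤ} (h : StrictMono π) (k : ℤ) :
    π k = k + π 0 := by
  have hsucc : ∀ k, π (k + 1) = π k + 1 := fun k => by
    obtain ⟨m, hm⟩ := π.surjective (π k + 1)
    have hkm : k < m := h.lt_iff_lt.mp (by omega)
    have := h.monotone (show k + 1 ≤ m by omega)
    have := h (lt_add_one k)
    omega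
  induction k using Int.induction_on with
  | zero => ring
  | succ k ih => rw [hsucc, ih]; ring
  | pred k ih => have := hsucc (-k - 1); rw [sub_add_cancel] at this; omega

theorem eq_one_of_forall_lt_apply_add_one (hn : 0 < n) {π : Equiv.Perm ℤ} (hπ : IsAffine n π)
    (h : ∀ x ∈ Ioc (0 : ℤ) n, π x < π (x + 1)) : π = 1 := by
  rw [isAffine_iff hn π 0] at hπ
  have hmono : StrictMono π := strictMono_int_of_lt_succ fun x => by
    obtain ⟨r, hr, m, rfl⟩ := exists_eq_add_mul_of_mem_Ioc hn 0 x
    rw [hπ.1.add_mul, add_right_comm, hπ.1.add_mul]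
    exact add_lt_add_left (h r (by simpa using hr)) _
  have hc : π 0 = 0 := by
    have h₀ := hπ.2
    rw [sum_congr rfl fun k _ => by rw [eq_add_apply_zero_of_strictMono hmono k,
      add_sub_cancel_left]] at h₀
    simp only [sum_const, Int.card_Ioc, sub_zero, zero_add, Int.toNat_natCast, nsmul_eq_mul] at h₀
    exact (mul_eq_zero.mp h₀).resolve_left (by exact_mod_cast hn.ne')
  ext k
  simp [eq_add_apply_zero_of_strictMono hmono k, hc]

variable (hn : 2 ≤ n)
include hn

theorem exists_word_length_eq_invCount (π : Equiv.Perm ℤ) (hπ : IsAffine n π) :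
    ∃ w : List ℤ, (∀ x ∈ w, 1 ≤ x ∧ x ≤ n) ∧ (w.map (affS n)).prod = π ∧
      w.length = invCount n π := by
  induction hN : invCount n π using Nat.strong_induction_on generalizing π with
  | _ N ih =>
    by_cases hdes : ∃ x ∈ Ioc (0 : ℤ) n, π (x + 1) < π x
    · obtain ⟨x, hx, hlt⟩ := hdes
      rw [mem_Ioc] at hx
      have hcount := invCount_mul_affS_of_gt hn hπ.1 hlt
      obtain ⟨w, hw, hprod, hlen⟩ :=
        ih _ (by omega) (π * affS n x) (isAffine_mul_affS hn hπ x) rfl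
      refine ⟨w ++ [x], fun y hy => ?_, ?_, ?_⟩
      · rcases List.mem_append.mp hy with hy | hy
        · exact hw y hy
        · rw [List.mem_singleton.mp hy]
          omega
      · simp [hprod, mul_assoc, affS_mul_self]
      · rw [List.length_append, List.length_singleton, hlen]
        omega
    · simp only [not_exists, not_and, not_lt] at hdes
      have hone := eq_one_of_forall_lt_apply_add_one (by omega) hπ fun x hx =>
        (hdes x hx).lt_of_ne fun he => by simpa using π.injective he
      subst hone
      exact ⟨[], by simp, rfl, by rw [← hN, invCount_one]; rfl⟩

theorem shiftEquivariant_prod_map_affS (w : List ℤ) :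
    ShiftEquivariant n ⇑((w.map (affS n)).prod) := by
  induction w with
  | nil => exact fun i => rfl
  | cons x w ih => exact (shiftEquivariant_affS hn x).perm_mul ih

theorem invCount_prod_map_affS_le (w : List ℤ) :
    invCount n (w.map (affS n)).prod ≤ w.length := by
  induction w using List.reverseRecOn with
  | nil => simp [invCount_one]
  | append_singleton w x ih =>
    have hπ := shiftEquivariant_prod_map_affS hn w
    simp only [List.map_append, List.map_singleton, List.prod_append, List.prod_singleton,
      List.length_append, List.length_singleton]
    set π := (w.map (affS n)).prod
    rcases lt_or_gt_of_ne (π.injective.ne (show x ≠ x + 1 by omega)) with hlt | hgt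
    · rw [invCount_mul_affS_of_lt hn hπ hlt]; omega
    · have := invCount_mul_affS_of_gt hn hπ hgt; omega

theorem wordLength_eq_invCount {π : Equiv.Perm ℤ} (hπ : IsAffine n π) :
    wordLength n π = invCount n π := by
  obtain ⟨w, hw, hprod, hlen⟩ := exists_word_length_eq_invCount hn π hπ
  refine le_antisymm (Nat.sInf_le ⟨w, hw, hprod, hlen⟩) (le_csInf ⟨_, w, hw, hprod, hlen⟩ ?_)
  rintro _ ⟨w', -, rfl, rfl⟩
  exact invCount_prod_map_affS_le hn w'

end Length

theorem wordLength_mul_affS_lt_iff {n : ℕ} (hn : 0 < n) {π : Equiv.Perm ℤ} (hπ : IsAffine n π)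
    (i : ℤ) : wordLength n (π * affS n i) < wordLength n π ↔ π (i + 1) < π i := by
  obtain rfl | hn₂ : n = 1 ∨ 2 ≤ n := by omega
  · have hone : π = 1 := eq_one_of_forall_lt_apply_add_one hn hπ fun x hx => by
      rw [show x = 1 by rw [mem_Ioc] at hx; omega]
      have := hπ.1 1
      simp only [Nat.cast_one] at this
      omega
    have hs : affS 1 i = 1 := by rw [affS, affT, dif_pos (by simp)]
    simp [hone, hs]
  · have hσ := isAffine_mul_affS hn₂ hπ i
    rw [wordLength_eq_invCount hn₂ hσ, wordLength_eq_invCount hn₂ hπ]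
    rcases lt_or_gt_of_ne (π.injective.ne (show i ≠ i + 1 by omega)) with hlt | hgt
    · rw [invCount_mul_affS_of_lt hn₂ hπ.1 hlt]; omega
    · have := invCount_mul_affS_of_gt hn₂ hπ.1 hgt; omega

section DedupMod

variable {n : ℕ}

theorem dedupMod_cons_of_forall {x : ℤ} {l : List ℤ} (h : ∀ y ∈ l, ¬ (n : ℤ) ∣ y - x) :
    dedupMod n (x :: l) = x :: dedupMod n l := by
  rw [dedupMod, List.filter_eq_self.mpr fun y hy =>
    decide_eq_true (by rw [ne_eq, ← Int.dvd_iff_emod_eq_zero]; exact h y hy)]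

theorem dedupMod_cons_cons_self (x : ℤ) (l : List ℤ) :
    dedupMod n (x :: x :: l) = dedupMod n (x :: l) := by
  rw [dedupMod, dedupMod, List.filter_cons_of_neg (by simp)]

theorem dedupMod_sublist (l : List ℤ) : (dedupMod n l).Sublist l := by
  induction l using dedupMod.induct n with
  | case1 => rw [dedupMod]
  | case2 x xs ih =>
    rw [dedupMod]
    rw [List.unattach_filter (hf := fun _ _ => rfl), List.unattach_attach] at ih
    exact (ih.trans List.filter_sublist).cons_cons x

theorem pairwise_dedupMod (l : List ℤ) :
    (dedupMod n l).Pairwise fun x y => ¬ (n : ℤ) ∣ y - x := by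
  induction l using dedupMod.induct n with
  | case1 => rw [dedupMod]; exact List.Pairwise.nil
  | case2 x xs ih =>
    rw [dedupMod]
    rw [List.unattach_filter (hf := fun _ _ => rfl), List.unattach_attach] at ih
    refine List.pairwise_cons.mpr ⟨fun y hy => ?_, ih⟩
    rw [Int.dvd_iff_emod_eq_zero]
    simpa using List.of_mem_filter ((dedupMod_sublist _).subset hy)

end DedupMod

/-- The `a₁ < ⋯ < a_l` in the definition of `α_min(z)`. -/
noncomputable def lowPoints (n : ℕ) (z : Equiv.Perm ℤ) : List ℤ :=
  ((Icc (1 : ℤ) n).sort (· ≤ ·)).filter fun a => a ≤ z a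

/-- What remains of `[z(a), a]` in the window of `α_min(z)⁻¹` once repeated residues are
removed. -/
def block (z : Equiv.Perm ℤ) (a : ℤ) : List ℤ := if z a = a then [a] else [z a, a]

section LowPoints

variable {n : ℕ} {z : Equiv.Perm ℤ}

theorem mem_lowPoints {a : ℤ} : a ∈ lowPoints n z ↔ (1 ≤ a ∧ a ≤ n) ∧ a ≤ z a := by
  simp [lowPoints]

theorem pairwise_lt_lowPoints : (lowPoints n z).Pairwise (· < ·) :=
  (sortedLT_sort _).pairwise.filter _

theorem mem_block_self (a : ℤ) : a ∈ block z a := by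
  unfold block; split_ifs <;> simp

theorem apply_mem_block (a : ℤ) : z a ∈ block z a := by
  unfold block; split_ifs with h <;> simp [h]

theorem eq_or_eq_of_mem_block {a v : ℤ} (h : v ∈ block z a) : v = z a ∨ v = a := by
  unfold block at h; split_ifs at h <;> simp_all

theorem getLast?_block (a : ℤ) : (block z a).getLast? = some a := by
  unfold block; split_ifs <;> rfl

variable (hz : ShiftEquivariant n z) (hzz : Involutive z)
include hz hzz

omit hz in
theorem eq_of_mem_block_of_le_apply {a v : ℤ} (ha : a ≤ z a) (hv : v ∈ block z a)
    (hlo : v ≤ z v) : v = a := by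
  obtain rfl | rfl := eq_or_eq_of_mem_block hv
  · rw [hzz] at hlo
    exact le_antisymm hlo ha
  · rfl

theorem apply_eq_self_of_dvd {x : ℤ} (h : (n : ℤ) ∣ z x - x) : z x = x := by
  obtain ⟨c, hc⟩ := h
  have := hz.add_mul x c
  rw [show x + c * n = z x by linarith, hzz] at this
  linarith

theorem dvd_sub_of_dvd_apply_sub_apply {x y : ℤ} (h : (n : ℤ) ∣ z x - z y) : (n : ℤ) ∣ x - y := by
  simpa only [hzz x, hzz y] using hz.dvd_sub_apply h

theorem dvd_sub_of_dvd_apply_sub {x y : ℤ} (hx : x ≤ z x) (hy : y ≤ z y)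
    (h : (n : ℤ) ∣ z x - y) : (n : ℤ) ∣ x - y := by
  obtain ⟨c, hc⟩ := h
  have := hz.add_mul y c
  rw [show y + c * n = z x by linarith, hzz] at this
  exact ⟨c, by linarith⟩

theorem not_dvd_sub_of_mem_pair {x y u v : ℤ} (hx : x ∈ lowPoints n z) (hy : y ∈ lowPoints n z)
    (hxy : x ≠ y) (hu : u ∈ [z x, x]) (hv : v ∈ [z y, y]) : ¬ (n : ℤ) ∣ v - u := by
  rw [mem_lowPoints] at hx hy
  refine fun h => hxy (eq_of_dvd_sub (m := n) ?_ (by omega) (by omega)).symm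
  simp only [List.mem_cons, List.not_mem_nil, or_false] at hu hv
  obtain rfl | rfl := hu <;> obtain rfl | rfl := hv
  · exact dvd_sub_of_dvd_apply_sub_apply hz hzz h
  · exact dvd_sub_comm.mp (dvd_sub_of_dvd_apply_sub hz hzz hx.2 hy.2 (dvd_sub_comm.mp h))
  · exact dvd_sub_of_dvd_apply_sub hz hzz hy.2 hx.2 h
  · exact h

end LowPoints

section Window

variable {n : ℕ} {z : Equiv.Perm ℤ} (hz : ShiftEquivariant n z) (hzz : Involutive z)
include hz hzz

theorem dedupMod_flatMap_pair {l : List ℤ} (hl : ∀ a ∈ l, a ∈ lowPoints n z) (hnd : l.Nodup) :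
    dedupMod n (l.flatMap fun a => [z a, a]) = l.flatMap (block z) := by
  induction l with
  | nil => rw [List.flatMap_nil, dedupMod]; rfl
  | cons x l ih =>
    obtain ⟨hxl, hnd⟩ := List.nodup_cons.mp hnd
    have hx := hl x List.mem_cons_self
    have hsep : ∀ v ∈ l.flatMap (fun a => [z a, a]), ∀ u ∈ [z x, x], ¬ (n : ℤ) ∣ v - u := by
      intro v hv u hu
      obtain ⟨y, hy, hvy⟩ := List.mem_flatMap.mp hv
      exact not_dvd_sub_of_mem_pair hz hzz hx (hl y (List.mem_cons_of_mem x hy))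
        (fun h => hxl (h ▸ hy)) hu hvy
    rw [List.flatMap_cons, List.flatMap_cons, List.cons_append, List.cons_append, List.nil_append,
      ← ih (fun a ha => hl a (List.mem_cons_of_mem x ha)) hnd, block]
    split_ifs with hfix
    · rw [hfix, dedupMod_cons_cons_self, dedupMod_cons_of_forall fun v hv => hsep v hv x (by simp)]
      rfl
    · have hx' : ¬ (n : ℤ) ∣ x - z x := fun h =>
        hfix (apply_eq_self_of_dvd hz hzz (dvd_sub_comm.mp h))
      rw [dedupMod_cons_of_forall fun v hv => ?_,
        dedupMod_cons_of_forall fun v hv => hsep v hv x (by simp)]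
      · rfl
      · rcases List.mem_cons.mp hv with rfl | hv
        · exact hx'
        · exact hsep v hv (z x) (by simp)

theorem aminWindow_eq_flatMap : aminWindow n z = (lowPoints n z).flatMap (block z) :=
  dedupMod_flatMap_pair hz hzz (fun _ => id) (pairwise_lt_lowPoints.imp ne_of_lt)

theorem exists_mem_aminWindow_dvd_sub (hn : 0 < n) (r : ℤ) :
    ∃ v ∈ aminWindow n z, (n : ℤ) ∣ v - r := by
  rw [aminWindow_eq_flatMap hz hzz]
  obtain ⟨x, hx, m, rfl⟩ := exists_eq_add_mul_of_mem_Ioc hn 0 r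
  rw [Set.mem_Ioc, zero_add] at hx
  suffices ∃ v ∈ (lowPoints n z).flatMap (block z), (n : ℤ) ∣ v - x by
    obtain ⟨v, hv, hd⟩ := this
    exact ⟨v, hv, by rw [← sub_sub]; exact dvd_sub hd (dvd_mul_left _ _)⟩
  by_cases hlo : x ≤ z x
  · exact ⟨x, List.mem_flatMap.mpr ⟨x, mem_lowPoints.mpr ⟨by omega, hlo⟩, mem_block_self x⟩,
      by simp⟩
  · obtain ⟨y, hy, m', hzx⟩ := exists_eq_add_mul_of_mem_Ioc hn 0 (z x)
    rw [Set.mem_Ioc, zero_add] at hy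
    have hzy : z y = x - m' * n := by
      have := hz.add_mul y m'
      rw [← hzx, hzz] at this
      linarith
    exact ⟨z y, List.mem_flatMap.mpr ⟨y, mem_lowPoints.mpr ⟨by omega, by omega⟩,
      apply_mem_block y⟩, ⟨-m', by rw [hzy]; ring⟩⟩

theorem length_aminWindow (hn : 0 < n) : (aminWindow n z).length = n := by
  have : NeZero n := ⟨hn.ne'⟩
  have hnd : ((aminWindow n z).map (Int.cast : ℤ → ZMod n)).Nodup :=
    List.pairwise_map.mpr <| (pairwise_dedupMod _).imp fun h he =>
      h ((ZMod.intCast_eq_intCast_iff_dvd_sub _ _ _).mp he)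
  have huniv : ((aminWindow n z).map (Int.cast : ℤ → ZMod n)).toFinset = univ := by
    refine eq_univ_of_forall fun r => ?_
    obtain ⟨k, rfl⟩ := ZMod.intCast_surjective r
    obtain ⟨v, hv, hd⟩ := exists_mem_aminWindow_dvd_sub hz hzz hn k
    exact List.mem_toFinset.mpr (List.mem_map.mpr
      ⟨v, hv, (ZMod.intCast_eq_intCast_iff_dvd_sub _ _ _).mpr (dvd_sub_comm.mp hd)⟩)
  rw [← List.length_map (f := (Int.cast : ℤ → ZMod n)), ← List.toFinset_card_of_nodup hnd, huniv,
    card_univ, ZMod.card]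

theorem mem_Icc_of_mem_aminWindow {v : ℤ} (hv : v ∈ aminWindow n z) (hlo : v ≤ z v) :
    1 ≤ v ∧ v ≤ n := by
  rw [aminWindow_eq_flatMap hz hzz] at hv
  obtain ⟨a, ha, hva⟩ := List.mem_flatMap.mp hv
  rw [eq_of_mem_block_of_le_apply hzz (mem_lowPoints.mp ha).2 hva hlo]
  exact (mem_lowPoints.mp ha).1

theorem pairwise_lt_aminWindow :
    (aminWindow n z).Pairwise fun u v => u ≤ z u → v ≤ z v → u < v := by
  rw [aminWindow_eq_flatMap hz hzz, List.pairwise_flatMap]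
  refine ⟨fun a _ => ?_, pairwise_lt_lowPoints.imp_of_mem fun ha hb hab x hx y hy hxlo hylo => ?_⟩
  · unfold block
    split_ifs with h
    · exact List.pairwise_singleton _ _
    · refine List.pairwise_pair.mpr fun hlo ha => absurd (le_antisymm ?_ ha) h
      rwa [hzz] at hlo
  · rw [eq_of_mem_block_of_le_apply hzz (mem_lowPoints.mp ha).2 hx hxlo,
      eq_of_mem_block_of_le_apply hzz (mem_lowPoints.mp hb).2 hy hylo]
    exact hab

theorem isChain_aminWindow : (aminWindow n z).IsChain fun u v => z u < u → v = z u := by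
  rw [aminWindow_eq_flatMap hz hzz]
  suffices ∀ l : List ℤ, (∀ a ∈ l, a ≤ z a) →
      (l.flatMap (block z)).IsChain fun u v => z u < u → v = z u from
    this _ fun a ha => (mem_lowPoints.mp ha).2
  intro l hl
  induction l with
  | nil => exact List.IsChain.nil
  | cons x l ih =>
    rw [List.flatMap_cons, List.isChain_append]
    refine ⟨?_, ih fun a ha => hl a (List.mem_cons_of_mem x ha), ?_⟩
    · unfold block
      split_ifs
      · exact List.isChain_singleton x
      · exact List.isChain_pair.mpr fun _ => (hzz x).symm
    · rw [getLast?_block]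
      intro u hu v _ hlt
      rw [Option.mem_some_iff] at hu
      subst hu
      exact absurd (hl x List.mem_cons_self) (not_le.mpr hlt)

theorem le_apply_of_mem_getLast?_aminWindow {v : ℤ} (hv : v ∈ (aminWindow n z).getLast?) :
    v ≤ z v := by
  rw [aminWindow_eq_flatMap hz hzz, List.getLast?_flatMap] at hv
  obtain ⟨a, ha, hav⟩ := List.exists_of_findSome?_eq_some hv
  rw [getLast?_block, Option.some_inj] at hav
  exact hav ▸ (mem_lowPoints.mp (List.mem_reverse.mp ha)).2

theorem getElem_aminWindow_add_one {k : ℕ} (hk : k < (aminWindow n z).length)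
    (hhi : z (aminWindow n z)[k] < (aminWindow n z)[k]) :
    ∃ hk' : k + 1 < (aminWindow n z).length, (aminWindow n z)[k + 1] = z (aminWindow n z)[k] := by
  by_cases hk' : k + 1 < (aminWindow n z).length
  · exact ⟨hk', List.isChain_iff_getElem.mp (isChain_aminWindow hz hzz) k hk' hhi⟩
  · refine absurd (le_apply_of_mem_getLast?_aminWindow hz hzz ?_) (not_le.mpr hhi)
    rw [List.getLast?_eq_getElem?, show (aminWindow n z).length - 1 = k by omega]
    exact List.getElem?_eq_getElem hk ▸ rfl

end Window

theorem lt_iff_of_strictMonoOn {z : Equiv.Perm ℤ} (hzz : Involutive z) {b : ℤ → ℤ}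
    (hmono : StrictMonoOn b {p | b p ≤ z (b p)})
    (hsucc : ∀ p, z (b p) < b p → b (p + 1) = z (b p)) {p q : ℤ} (hpq : b p < b q) :
    q < p ↔ z (b q) < z (b p) ∧ z (b q) ≤ b p := by
  have hlo : ∀ {r}, z (b r) < b r → b (r + 1) ≤ z (b (r + 1)) := fun hr => by
    rw [hsucc _ hr, hzz]; exact hr.le
  by_cases hq : b q ≤ z (b q)
  · refine iff_of_false (fun hqp => ?_) fun h => by omega
    by_cases hp : b p ≤ z (b p)
    · exact absurd (hmono hq hp hqp) (not_lt.mpr hpq.le)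
    · have := hmono hq (hlo (not_le.mp hp)) (by omega)
      rw [hsucc _ (not_le.mp hp)] at this
      omega
  · have hq' := not_le.mp hq
    by_cases hp : b p ≤ z (b p)
    · have := hmono.le_iff_le (hlo hq') hp
      rw [hsucc _ hq'] at this
      have hne : z (b q) ≠ z (b p) := fun h => hpq.ne' (z.injective h)
      constructor
      · intro hqp
        have := this.mpr (by omega)
        exact ⟨lt_of_le_of_ne (this.trans hp) hne, this⟩
      · intro h
        have := this.mp h.2
        omega
    · have hp' := not_le.mp hp
      have := hmono.lt_iff_lt (hlo hq') (hlo hp')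
      rw [hsucc _ hq', hsucc _ hp'] at this
      constructor
      · intro hqp
        exact ⟨this.mpr (by omega), by omega⟩
      · intro h
        have := this.mp h.1
        omega

section AminInverse

variable {n : ℕ} {z : Equiv.Perm ℤ} {b : ℤ → ℤ} (hn : 0 < n) (hz : ShiftEquivariant n z)
  (hzz : Involutive z) (hb : ShiftEquivariant n b)
  (hwin : ∀ k : ℕ, k < n → b (k + 1) = (aminWindow n z).getD k 0)
include hn hz hzz hwin

theorem apply_natCast_add_one_eq_getElem {k : ℕ} (hk : k < n) :
    b (k + 1) = (aminWindow n z)[k]'(by rwa [length_aminWindow hz hzz hn]) := by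
  rw [hwin k hk, List.getD_eq_getElem]

include hb

theorem strictMonoOn_of_aminWindow : StrictMonoOn b {p | b p ≤ z (b p)} := by
  intro p hp q hq hpq
  obtain ⟨k, hk, m, rfl⟩ := exists_eq_natCast_add_one_add_mul hn p
  obtain ⟨k', hk', m', rfl⟩ := exists_eq_natCast_add_one_add_mul hn q
  replace hp : b (k + 1) ≤ z (b (k + 1)) := by simpa [hb.add_mul, hz.add_mul] using hp
  replace hq : b (k' + 1) ≤ z (b (k' + 1)) := by simpa [hb.add_mul, hz.add_mul] using hq
  rw [hb.add_mul, hb.add_mul]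
  rw [apply_natCast_add_one_eq_getElem hn hz hzz hwin hk] at hp ⊢
  rw [apply_natCast_add_one_eq_getElem hn hz hzz hwin hk'] at hq ⊢
  rcases lt_trichotomy m m' with hm | rfl | hm
  · have h₁ := mem_Icc_of_mem_aminWindow hz hzz (List.getElem_mem _) hp
    have h₂ := mem_Icc_of_mem_aminWindow hz hzz (List.getElem_mem _) hq
    have : (m + 1) * (n : ℤ) ≤ m' * n := mul_le_mul_of_nonneg_right (by omega) (by positivity)
    linarith
  · exact add_lt_add_left (List.pairwise_iff_getElem.mp (pairwise_lt_aminWindow hz hzz) k k' _ _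
      (by omega) hp hq) _
  · have : (m' + 1) * (n : ℤ) ≤ m * n := mul_le_mul_of_nonneg_right (by omega) (by positivity)
    have : (k' : ℤ) < n := by exact_mod_cast hk'
    have : (0 : ℤ) ≤ k := k.cast_nonneg
    linarith

theorem apply_add_one_of_aminWindow {p : ℤ} (hp : z (b p) < b p) : b (p + 1) = z (b p) := by
  obtain ⟨k, hk, m, rfl⟩ := exists_eq_natCast_add_one_add_mul hn p
  rw [hb.add_mul, hz.add_mul, add_lt_add_iff_right,
    apply_natCast_add_one_eq_getElem hn hz hzz hwin hk] at hp
  obtain ⟨hk', hsucc⟩ := getElem_aminWindow_add_one hz hzz _ hp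
  rw [length_aminWindow hz hzz hn] at hk'
  rw [show (k : ℤ) + 1 + m * n + 1 = ((k + 1 : ℕ) : ℤ) + 1 + m * n by push_cast; ring,
    hb.add_mul, hb.add_mul, hz.add_mul, apply_natCast_add_one_eq_getElem hn hz hzz hwin hk',
    apply_natCast_add_one_eq_getElem hn hz hzz hwin hk, hsucc]

end AminInverse

theorem apply_lt_apply_iff_of_aminWindow {n : ℕ} (hn : 0 < n) {z a : Equiv.Perm ℤ}
    (hz : ShiftEquivariant n z) (hzz : Involutive z) (ha : ShiftEquivariant n a)
    (hwin : ∀ k : ℕ, k < n → a⁻¹ ((k : ℤ) + 1) = (aminWindow n z).getD k 0) {i j : ℤ}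
    (hij : i < j) : a j < a i ↔ z j < z i ∧ z j ≤ i := by
  have hb := ha.perm_inv
  simpa using lt_iff_of_strictMonoOn hzz (strictMonoOn_of_aminWindow hn hz hzz hb hwin)
    (fun _ => apply_add_one_of_aminWindow hn hz hzz hb hwin) (p := a i) (q := a j)
    (by simpa using hij)

end AffinePerm

/-- for an affine involution `z`, the visible descents of `z` are exactly
the right descents of `α_min(z)`, and the involution code of `z` equals the code
of `α_min(z)`.  Here `a` is `α_min(z)`, characterized by the property that the window
of `a⁻¹` in positions `1, …, n` is `[[z(a₁), a₁, z(a₂), a₂, …]]`. -/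
theorem visible_descents_and_icode_of_amin (n : ℕ) (hn : 0 < n)
    (z : Equiv.Perm ℤ) (hz : IsAffine n z) (hzi : z⁻¹ = z)
    (a : Equiv.Perm ℤ) (ha : IsAffine n a)
    (hwin : ∀ k : ℕ, k < n → a⁻¹ ((k : ℤ) + 1) = (aminWindow n z).getD k 0) :
    (∀ i : ℤ, (z (i + 1) < z i ∧ z (i + 1) ≤ i) ↔
      wordLength n (a * affS n i) < wordLength n a) ∧
    (∀ i : ℤ, 1 ≤ i → i ≤ n → icodeEntry z i = codeEntry a i) := by
  have hzz : Function.Involutive z := fun i => calc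
    z (z i) = z⁻¹ (z i) := by rw [hzi]
    _ = i := z.symm_apply_apply i
  have key : ∀ i j, i < j → (a j < a i ↔ z j < z i ∧ z j ≤ i) := fun i j =>
    AffinePerm.apply_lt_apply_iff_of_aminWindow hn hz.1 hzz ha.1 hwin
  refine ⟨fun i => ?_, fun i _ _ => ?_⟩
  · rw [AffinePerm.wordLength_mul_affS_lt_iff hn ha, key i (i + 1) (lt_add_one i)]
  · exact Nat.card_congr <| Equiv.subtypeEquivRight fun j =>
      ⟨fun ⟨hij, h⟩ => ⟨hij, (key i j hij).mpr h⟩, fun ⟨hij, h⟩ => ⟨hij, (key i j hij).mp h⟩⟩
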